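/- arXiv:2508.03867 — 4 statements merged into one kernel-verified Lean document; each statement's English description precedes it below -/
import Mathlib

section
/- Let A_1, A_2 be activation patterns of a deep ReLU network without biases, and set r_i = min_{1 ≤ ℓ ≤ L−1} Σ_j (A_i)^ℓ_j. Let n_min = min_{1 ≤ ℓ ≤ L−1} n_ℓ, ℓ_min^+ = max{ℓ ∈ [L−1] : n_ℓ = n_min}, and ℓ_min^− = min{ℓ ∈ [L−1] : n_ℓ = n_min}. Let R_i denote the set of A_i-active paths, S = R_1 ∩ R_2, let r_a be the maximum over all real θ of rank(N_{R_1∖S}(θ)), let r_b be the maximum over all real θ of rank(N_{R_2∖S}(θ)), and set t = r_a + r_b. Then for every real θ: (1) rank(M_{A_1}(θ)) ≤ r_1; (2) rank(M_{A_2}(θ)) ≤ r_2; (3a) if (A_1)^ℓ = (A_2)^ℓ for all ℓ with ℓ_min^+ < ℓ ≤ L−1, then the horizontal concatenation [M_{A_1}(θ) | M_{A_2}(θ)] has rank at most n_min; (3b) if (A_1)^ℓ = (A_2)^ℓ for all ℓ with 1 ≤ ℓ < ℓ_min^−, then the vertical concatenation [M_{A_1}(θ) ; M_{A_2}(θ)]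 has rank at most n_min; (4) rank(M_{A_1}(θ) − M_{A_2}(θ)) ≤ t. -/
noncomputable section

def maskMat (n : ℕ → ℕ) (A : (ℓ : ℕ) → Fin (n ℓ) → Bool) (ℓ : ℕ) :
    Matrix (Fin (n ℓ)) (Fin (n ℓ)) ℝ :=
  Matrix.diagonal (fun i => if A ℓ i then (1 : ℝ) else 0)

def preM (n : ℕ → ℕ) (A : (ℓ : ℕ) → Fin (n ℓ) → Bool)
    (W : (ℓ : ℕ) → Matrix (Fin (n (ℓ + 1))) (Fin (n ℓ)) ℝ) :
    (ℓ : ℕ) → Matrix (Fin (n ℓ)) (Fin (n 0)) ℝ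
  | 0 => 1
  | ℓ + 1 => maskMat n A (ℓ + 1) * (W ℓ * preM n A W ℓ)

/-- The masked matrix `M_A(θ)` of an `L`-layer ReLU network without biases. -/
def maskedMatrix (n : ℕ → ℕ) (A : (ℓ : ℕ) → Fin (n ℓ) → Bool)
    (W : (ℓ : ℕ) → Matrix (Fin (n (ℓ + 1))) (Fin (n ℓ)) ℝ) :
    (L : ℕ) → Matrix (Fin (n L)) (Fin (n 0)) ℝ
  | 0 => 1
  | L + 1 => W L * preM n A W L

/-- The number of active neurons `Σ_i A^ℓ_i` at layer `ℓ`. -/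
def activeCard (n : ℕ → ℕ) (A : (ℓ : ℕ) → Fin (n ℓ) → Bool) (ℓ : ℕ) : ℕ :=
  (Finset.univ.filter fun i : Fin (n ℓ) => A ℓ i = true).card

/-- A path `p = (p_1, …, p_{L-1})` through the hidden layers (`L = K + 1`). -/
abbrev NPath (n : ℕ → ℕ) (K : ℕ) : Type := ∀ ℓ : Fin K, Fin (n (ℓ.1 + 1))

/-- A path extended by the output unit `i`. -/
def extPath (n : ℕ → ℕ) {K : ℕ} (i : Fin (n (K + 1))) (p : NPath n K) :
    ∀ ℓ : Fin (K + 1), Fin (n (ℓ.1 + 1)) :=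
  Fin.lastCases (motive := fun ℓ : Fin (K + 1) => Fin (n (ℓ.1 + 1))) i (fun ℓ => p ℓ)

/-- The product of the weights along a path `p` from input `j` to output `i`. -/
def pathTerm (n : ℕ → ℕ) {K : ℕ}
    (W : (ℓ : ℕ) → Matrix (Fin (n (ℓ + 1))) (Fin (n ℓ)) ℝ)
    (i : Fin (n (K + 1))) (j : Fin (n 0)) (p : NPath n K) : ℝ :=
  W 0 (extPath n i p ⟨0, Nat.succ_pos K⟩) j *
    ∏ ℓ : Fin K, W (ℓ.1 + 1) (extPath n i p ℓ.succ) (p ℓ)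

/-- The path `p` is `A`-active. -/
def IsActivePath (n : ℕ → ℕ) (A : (ℓ : ℕ) → Fin (n ℓ) → Bool) {K : ℕ}
    (p : NPath n K) : Prop :=
  ∀ ℓ : Fin K, A (ℓ.1 + 1) (p ℓ) = true

/-- The finite set of `A`-active paths. -/
noncomputable def activePaths (n : ℕ → ℕ) (A : (ℓ : ℕ) → Fin (n ℓ) → Bool) (K : ℕ) :
    Finset (NPath n K) :=
  @Finset.filter _ (fun p => IsActivePath n A p) (Classical.decPred _) Finset.univ

/-- The path matrix `N_P(θ)` associated with a set `P` of paths. -/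
noncomputable def pathMatrix (n : ℕ → ℕ) {K : ℕ} (P : Finset (NPath n K))
    (W : (ℓ : ℕ) → Matrix (Fin (n (ℓ + 1))) (Fin (n ℓ)) ℝ) :
    Matrix (Fin (n (K + 1))) (Fin (n 0)) ℝ :=
  Matrix.of fun i j => ∑ p ∈ P, pathTerm n W i j p

/-!
Write `M_A(θ) = W^(L) D_{L-1} W^(L-1) ⋯ D_1 W^(1)` with `D_ℓ = diag(A^ℓ)`. Cutting this
product at a hidden layer `ℓ` factors `M_A(θ)` through `D_ℓ`, whose rank is the number of
active neurons, which gives (1) and (2). If the two patterns agree on every layer above `ℓ`,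
both masked matrices share the left factor `W^(L) D_{L-1} ⋯ W^(ℓ+1)`, so `[M_{A_1} | M_{A_2}]`
factors through `ℝ^{n_ℓ}`; symmetrically, agreement below `ℓ` gives a common right factor
`W^(ℓ) D_{ℓ-1} ⋯ W^(1)` for the stacked matrix. Taking `ℓ = ℓ_min^±` gives (3a) and (3b).
Finally, expanding the product entrywise gives `M_A(θ) = N_{R_A}(θ)`, so in
`M_{A_1}(θ) - M_{A_2}(θ)` the paths common to both patterns cancel and (4) follows from
subadditivity of the rank.
-/

theorem Matrix.rank_sub_le {R m k : Type*} [Field R] [Fintype m] [Fintype k]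
    (A B : Matrix m k R) : (A - B).rank ≤ A.rank + B.rank := by
  refine (Submodule.finrank_mono ?_).trans (Submodule.finrank_add_le_finrank_add_finrank _ _)
  rintro _ ⟨v, rfl⟩
  rw [Matrix.mulVecLin_apply, Matrix.sub_mulVec]
  exact Submodule.sub_mem_sup (LinearMap.mem_range_self _ v) (LinearMap.mem_range_self _ v)

section

variable {n : ℕ → ℕ}

/-- The masked product `D_{ℓ+d} W^(ℓ+d) ⋯ D_{ℓ+1} W^(ℓ+1)` from layer `ℓ` to layer `ℓ + d`. -/
def maskedSegment (A : (ℓ : ℕ) → Fin (n ℓ) → Bool)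
    (W : (ℓ : ℕ) → Matrix (Fin (n (ℓ + 1))) (Fin (n ℓ)) ℝ) (ℓ : ℕ) :
    (d : ℕ) → Matrix (Fin (n (ℓ + d))) (Fin (n ℓ)) ℝ
  | 0 => 1
  | d + 1 => maskMat n A (ℓ + d + 1) * (W (ℓ + d) * maskedSegment A W ℓ d)

theorem preM_add (A : (ℓ : ℕ) → Fin (n ℓ) → Bool)
    (W : (ℓ : ℕ) → Matrix (Fin (n (ℓ + 1))) (Fin (n ℓ)) ℝ) (ℓ d : ℕ) :
    preM n A W (ℓ + d) = maskedSegment A W ℓ d * preM n A W ℓ := by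
  induction d with
  | zero => simp [maskedSegment]
  | succ d ih =>
    change preM n A W (ℓ + d + 1) = _
    rw [preM, ih, maskedSegment, Matrix.mul_assoc, Matrix.mul_assoc]

theorem preM_succ (A : (ℓ : ℕ) → Fin (n ℓ) → Bool)
    (W : (ℓ : ℕ) → Matrix (Fin (n (ℓ + 1))) (Fin (n ℓ)) ℝ) (ℓ : ℕ) :
    preM n A W (ℓ + 1) = maskMat n A (ℓ + 1) * maskedMatrix n A W (ℓ + 1) :=
  rfl

theorem maskedMatrix_add_succ (A : (ℓ : ℕ) → Fin (n ℓ) → Bool)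
    (W : (ℓ : ℕ) → Matrix (Fin (n (ℓ + 1))) (Fin (n ℓ)) ℝ) (ℓ d : ℕ) :
    maskedMatrix n A W (ℓ + d + 1) = (W (ℓ + d) * maskedSegment A W ℓ d) * preM n A W ℓ := by
  rw [maskedMatrix, preM_add, Matrix.mul_assoc]

theorem maskedMatrix_add_succ_of_one_le (A : (ℓ : ℕ) → Fin (n ℓ) → Bool)
    (W : (ℓ : ℕ) → Matrix (Fin (n (ℓ + 1))) (Fin (n ℓ)) ℝ) {ℓ : ℕ} (hℓ : 1 ≤ ℓ) (d : ℕ) :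
    maskedMatrix n A W (ℓ + d + 1) =
      (W (ℓ + d) * maskedSegment A W ℓ d * maskMat n A ℓ) * maskedMatrix n A W ℓ := by
  obtain ⟨ℓ, rfl⟩ := Nat.exists_eq_add_of_le' hℓ
  rw [maskedMatrix_add_succ, preM_succ]
  simp only [Matrix.mul_assoc]

theorem rank_maskMat (A : (ℓ : ℕ) → Fin (n ℓ) → Bool) (ℓ : ℕ) :
    (maskMat n A ℓ).rank = activeCard n A ℓ := by
  classical
  rw [maskMat, Matrix.rank_diagonal, activeCard, Fintype.card_subtype]
  congr 1
  exact Finset.filter_congr fun i _ => by cases A ℓ i <;> simp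

theorem maskMat_congr {A₁ A₂ : (ℓ : ℕ) → Fin (n ℓ) → Bool} {m : ℕ}
    (h : ∀ i, A₁ m i = A₂ m i) : maskMat n A₁ m = maskMat n A₂ m := by
  simp only [maskMat, h]

theorem maskedSegment_congr {A₁ A₂ : (ℓ : ℕ) → Fin (n ℓ) → Bool}
    (W : (ℓ : ℕ) → Matrix (Fin (n (ℓ + 1))) (Fin (n ℓ)) ℝ) (ℓ d : ℕ)
    (h : ∀ m, ℓ < m → m ≤ ℓ + d → ∀ i, A₁ m i = A₂ m i) :
    maskedSegment A₁ W ℓ d = maskedSegment A₂ W ℓ d := by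
  induction d with
  | zero => rfl
  | succ d ih =>
    rw [maskedSegment, maskedSegment, ih fun m h₁ h₂ => h m h₁ (by omega),
      maskMat_congr (h _ (by omega) (by omega))]

theorem preM_congr {A₁ A₂ : (ℓ : ℕ) → Fin (n ℓ) → Bool}
    (W : (ℓ : ℕ) → Matrix (Fin (n (ℓ + 1))) (Fin (n ℓ)) ℝ) (ℓ : ℕ)
    (h : ∀ m, 1 ≤ m → m ≤ ℓ → ∀ i, A₁ m i = A₂ m i) :
    preM n A₁ W ℓ = preM n A₂ W ℓ := by
  induction ℓ with
  | zero => rfl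
  | succ ℓ ih =>
    rw [preM, preM, ih fun m h₁ h₂ => h m h₁ (by omega),
      maskMat_congr (h _ (by omega) le_rfl)]

theorem maskedMatrix_congr {A₁ A₂ : (ℓ : ℕ) → Fin (n ℓ) → Bool}
    (W : (ℓ : ℕ) → Matrix (Fin (n (ℓ + 1))) (Fin (n ℓ)) ℝ) (L : ℕ)
    (h : ∀ m, 1 ≤ m → m < L → ∀ i, A₁ m i = A₂ m i) :
    maskedMatrix n A₁ W L = maskedMatrix n A₂ W L := by
  cases L with
  | zero => rfl
  | succ L => exact congrArg (W L * ·) (preM_congr W L fun m h₁ h₂ => h m h₁ (by omega))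

theorem rank_maskedMatrix_le_activeCard (A : (ℓ : ℕ) → Fin (n ℓ) → Bool)
    (W : (ℓ : ℕ) → Matrix (Fin (n (ℓ + 1))) (Fin (n ℓ)) ℝ) {ℓ K : ℕ}
    (h₁ : 1 ≤ ℓ) (h₂ : ℓ ≤ K) :
    (maskedMatrix n A W (K + 1)).rank ≤ activeCard n A ℓ := by
  obtain ⟨d, rfl⟩ := Nat.exists_eq_add_of_le h₂
  rw [maskedMatrix_add_succ_of_one_le A W h₁, ← rank_maskMat]
  exact (Matrix.rank_mul_le_left _ _).trans (Matrix.rank_mul_le_right _ _)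

theorem rank_fromCols_maskedMatrix_le {A₁ A₂ : (ℓ : ℕ) → Fin (n ℓ) → Bool}
    (W : (ℓ : ℕ) → Matrix (Fin (n (ℓ + 1))) (Fin (n ℓ)) ℝ) {ℓ K : ℕ} (hℓ : ℓ ≤ K)
    (h : ∀ m, ℓ < m → m ≤ K → ∀ i, A₁ m i = A₂ m i) :
    (Matrix.fromCols (maskedMatrix n A₁ W (K + 1)) (maskedMatrix n A₂ W (K + 1))).rank
      ≤ n ℓ := by
  obtain ⟨d, rfl⟩ := Nat.exists_eq_add_of_le hℓ
  rw [maskedMatrix_add_succ, maskedMatrix_add_succ, maskedSegment_congr W ℓ d h,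
    ← Matrix.mul_fromCols]
  exact (Matrix.rank_mul_le_left _ _).trans
    ((Matrix.rank_le_card_width _).trans_eq (Fintype.card_fin _))

theorem rank_fromRows_maskedMatrix_le {A₁ A₂ : (ℓ : ℕ) → Fin (n ℓ) → Bool}
    (W : (ℓ : ℕ) → Matrix (Fin (n (ℓ + 1))) (Fin (n ℓ)) ℝ) {ℓ K : ℕ} (h₁ : 1 ≤ ℓ) (h₂ : ℓ ≤ K)
    (h : ∀ m, 1 ≤ m → m < ℓ → ∀ i, A₁ m i = A₂ m i) :
    (Matrix.fromRows (maskedMatrix n A₁ W (K + 1)) (maskedMatrix n A₂ W (K + 1))).rank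
      ≤ n ℓ := by
  obtain ⟨d, rfl⟩ := Nat.exists_eq_add_of_le h₂
  rw [maskedMatrix_add_succ_of_one_le A₁ W h₁, maskedMatrix_add_succ_of_one_le A₂ W h₁,
    maskedMatrix_congr W ℓ h, ← Matrix.fromRows_mul]
  exact (Matrix.rank_mul_le_right _ _).trans
    ((Matrix.rank_le_card_height _).trans_eq (Fintype.card_fin _))

theorem extPath_snoc {K : ℕ} (i : Fin (n (K + 2))) (k : Fin (n (K + 1))) (p : NPath n K) :
    extPath n i (Fin.snoc (α := fun ℓ : Fin (K + 1) => Fin (n (ℓ.1 + 1))) p k) =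
      Fin.snoc (α := fun ℓ : Fin (K + 2) => Fin (n (ℓ.1 + 1))) (extPath n k p) i := by
  funext ℓ
  induction ℓ using Fin.lastCases with
  | last => simp [extPath]
  | cast m => induction m using Fin.lastCases <;> simp [extPath]

theorem pathTerm_snoc {K : ℕ} (W : (ℓ : ℕ) → Matrix (Fin (n (ℓ + 1))) (Fin (n ℓ)) ℝ)
    (i : Fin (n (K + 2))) (j : Fin (n 0)) (k : Fin (n (K + 1))) (p : NPath n K) :
    pathTerm n W i j (Fin.snoc (α := fun ℓ : Fin (K + 1) => Fin (n (ℓ.1 + 1))) p k) =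
      W (K + 1) i k * pathTerm n W k j p := by
  rw [pathTerm, pathTerm, extPath_snoc, Fin.prod_univ_castSucc]
  have h (x : Fin K) : Fin.snoc (α := fun ℓ : Fin (K + 2) => Fin (n (ℓ.1 + 1)))
      (extPath n k p) i x.castSucc.succ = extPath n k p x.succ :=
    Fin.snoc_castSucc (i := x.succ) ..
  simp [h]
  ring

theorem pathTerm_of_nPath_zero (W : (ℓ : ℕ) → Matrix (Fin (n (ℓ + 1))) (Fin (n ℓ)) ℝ)
    (i : Fin (n 1)) (j : Fin (n 0)) (p : NPath n 0) : pathTerm n W i j p = W 0 i j := by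
  have h : extPath n i p 0 = i := Fin.lastCases_last ..
  simp [pathTerm, h]

theorem isActivePath_snoc (A : (ℓ : ℕ) → Fin (n ℓ) → Bool) {K : ℕ}
    (k : Fin (n (K + 1))) (p : NPath n K) :
    IsActivePath n A (Fin.snoc (α := fun ℓ : Fin (K + 1) => Fin (n (ℓ.1 + 1))) p k) ↔
      A (K + 1) k = true ∧ IsActivePath n A p := by
  simp [IsActivePath, Fin.forall_fin_succ', and_comm]

theorem pathMatrix_activePaths_zero (A : (ℓ : ℕ) → Fin (n ℓ) → Bool)
    (W : (ℓ : ℕ) → Matrix (Fin (n (ℓ + 1))) (Fin (n ℓ)) ℝ) :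
    pathMatrix n (activePaths n A 0) W = W 0 := by
  ext i j
  simp [pathMatrix, activePaths, IsActivePath, pathTerm_of_nPath_zero]

theorem pathMatrix_activePaths_succ (A : (ℓ : ℕ) → Fin (n ℓ) → Bool)
    (W : (ℓ : ℕ) → Matrix (Fin (n (ℓ + 1))) (Fin (n ℓ)) ℝ) (K : ℕ) :
    pathMatrix n (activePaths n A (K + 1)) W =
      W (K + 1) * (maskMat n A (K + 1) * pathMatrix n (activePaths n A K) W) := by
  classical
  ext i j
  rw [Matrix.mul_apply]
  simp only [pathMatrix, activePaths, maskMat, Matrix.of_apply, Matrix.diagonal_mul,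
    Finset.sum_filter]
  rw [← (Fin.snocEquiv (fun ℓ : Fin (K + 1) => Fin (n (ℓ.1 + 1)))).sum_comp
    (fun p => if IsActivePath n A p then pathTerm n W i j p else 0), Fintype.sum_prod_type]
  refine Finset.sum_congr rfl fun k _ => ?_
  simp only [Fin.snocEquiv, Equiv.coe_fn_mk, isActivePath_snoc, pathTerm_snoc, Finset.mul_sum]
  refine Finset.sum_congr rfl fun p _ => ?_
  by_cases hk : A (K + 1) k <;> by_cases hp : IsActivePath n A p <;> simp [hk, hp]

theorem maskedMatrix_succ_eq_pathMatrix (A : (ℓ : ℕ) → Fin (n ℓ) → Bool)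
    (W : (ℓ : ℕ) → Matrix (Fin (n (ℓ + 1))) (Fin (n ℓ)) ℝ) (K : ℕ) :
    maskedMatrix n A W (K + 1) = pathMatrix n (activePaths n A K) W := by
  induction K with
  | zero => rw [pathMatrix_activePaths_zero, maskedMatrix, preM, Matrix.mul_one]
  | succ K ih => rw [pathMatrix_activePaths_succ, ← ih, maskedMatrix, preM_succ]

theorem pathMatrix_sub_pathMatrix {K : ℕ} (P Q : Finset (NPath n K))
    (W : (ℓ : ℕ) → Matrix (Fin (n (ℓ + 1))) (Fin (n ℓ)) ℝ) :
    pathMatrix n P W - pathMatrix n Q W = pathMatrix n (P \ Q) W - pathMatrix n (Q \ P) W := by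
  ext i j
  simp only [Matrix.sub_apply, pathMatrix, Matrix.of_apply, Finset.sum_sdiff_sub_sum_sdiff]

end

theorem statement11_general (n : ℕ → ℕ) (K : ℕ)
    (A₁ A₂ : (ℓ : ℕ) → Fin (n ℓ) → Bool) (r₁ r₂ nmin ℓplus ℓminus ra rb : ℕ)
    (hr₁ : IsLeast ((fun ℓ => activeCard n A₁ ℓ) '' Set.Icc 1 K) r₁)
    (hr₂ : IsLeast ((fun ℓ => activeCard n A₂ ℓ) '' Set.Icc 1 K) r₂)
    (hplus : IsGreatest {ℓ | ℓ ∈ Set.Icc 1 K ∧ n ℓ = nmin} ℓplus)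
    (hminus : IsLeast {ℓ | ℓ ∈ Set.Icc 1 K ∧ n ℓ = nmin} ℓminus)
    (hra : IsGreatest
      (Set.range fun W : (ℓ : ℕ) → Matrix (Fin (n (ℓ + 1))) (Fin (n ℓ)) ℝ =>
        (pathMatrix n (activePaths n A₁ K \ (activePaths n A₁ K ∩ activePaths n A₂ K)) W).rank)
      ra)
    (hrb : IsGreatest
      (Set.range fun W : (ℓ : ℕ) → Matrix (Fin (n (ℓ + 1))) (Fin (n ℓ)) ℝ =>
        (pathMatrix n (activePaths n A₂ K \ (activePaths n A₁ K ∩ activePaths n A₂ K)) W).rank)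
      rb) :
    ∀ W : (ℓ : ℕ) → Matrix (Fin (n (ℓ + 1))) (Fin (n ℓ)) ℝ,
      (maskedMatrix n A₁ W (K + 1)).rank ≤ r₁ ∧
      (maskedMatrix n A₂ W (K + 1)).rank ≤ r₂ ∧
      ((∀ ℓ, ℓplus < ℓ → ℓ ≤ K → ∀ i : Fin (n ℓ), A₁ ℓ i = A₂ ℓ i) →
        (Matrix.fromCols (maskedMatrix n A₁ W (K + 1))
          (maskedMatrix n A₂ W (K + 1))).rank ≤ nmin) ∧
      ((∀ ℓ, 1 ≤ ℓ → ℓ < ℓminus → ∀ i : Fin (n ℓ), A₁ ℓ i = A₂ ℓ i) →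
        (Matrix.fromRows (maskedMatrix n A₁ W (K + 1))
          (maskedMatrix n A₂ W (K + 1))).rank ≤ nmin) ∧
      (maskedMatrix n A₁ W (K + 1) - maskedMatrix n A₂ W (K + 1)).rank ≤ ra + rb := by
  intro W
  refine ⟨?_, ?_, fun hagree => ?_, fun hagree => ?_, ?_⟩
  · obtain ⟨ℓ, ⟨h₁, h₂⟩, rfl⟩ := hr₁.1
    exact rank_maskedMatrix_le_activeCard A₁ W h₁ h₂
  · obtain ⟨ℓ, ⟨h₁, h₂⟩, rfl⟩ := hr₂.1
    exact rank_maskedMatrix_le_activeCard A₂ W h₁ h₂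
  · obtain ⟨⟨-, hℓK⟩, rfl⟩ := hplus.1
    exact rank_fromCols_maskedMatrix_le W hℓK hagree
  · obtain ⟨⟨h₁, h₂⟩, rfl⟩ := hminus.1
    exact rank_fromRows_maskedMatrix_le W h₁ h₂ hagree
  · rw [Finset.sdiff_inter_self_left] at hra
    rw [Finset.sdiff_inter_self_right] at hrb
    rw [maskedMatrix_succ_eq_pathMatrix, maskedMatrix_succ_eq_pathMatrix,
      pathMatrix_sub_pathMatrix]
    exact (Matrix.rank_sub_le _ _).trans (add_le_add (hra.2 ⟨W, rfl⟩) (hrb.2 ⟨W, rfl⟩))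

/-- Determinantal rank constraints for deep two-block ReLU pattern
varieties (`L = K + 1 ≥ 2`): with `r_i = min_{1 ≤ ℓ ≤ L-1} Σ_j (A_i)^ℓ_j`,
`n_min = min_{1 ≤ ℓ ≤ L-1} n_ℓ`, `ℓ_min^± ` the largest/smallest minimizing layer,
`R_i` the set of `A_i`-active paths, `S = R_1 ∩ R_2`, and `r_a, r_b` the maximal
ranks of the path matrices of `R_1 ∖ S` and `R_2 ∖ S`, for every parameter `θ`:
(1) `rank M_{A_1}(θ) ≤ r_1`, (2) `rank M_{A_2}(θ) ≤ r_2`,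
(3a) if `A_1, A_2` agree above `ℓ_min^+` then `rank [M_{A_1}(θ) | M_{A_2}(θ)] ≤ n_min`,
(3b) if `A_1, A_2` agree below `ℓ_min^−` then `rank [M_{A_1}(θ) ; M_{A_2}(θ)] ≤ n_min`,
(4) `rank (M_{A_1}(θ) − M_{A_2}(θ)) ≤ r_a + r_b`. -/
theorem statement11 (n : ℕ → ℕ) (K : ℕ) (hK : 1 ≤ K)
    (A₁ A₂ : (ℓ : ℕ) → Fin (n ℓ) → Bool) (r₁ r₂ nmin ℓplus ℓminus ra rb : ℕ)
    (hr₁ : IsLeast ((fun ℓ => activeCard n A₁ ℓ) '' Set.Icc 1 K) r₁)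
    (hr₂ : IsLeast ((fun ℓ => activeCard n A₂ ℓ) '' Set.Icc 1 K) r₂)
    (hnmin : IsLeast (n '' Set.Icc 1 K) nmin)
    (hplus : IsGreatest {ℓ | ℓ ∈ Set.Icc 1 K ∧ n ℓ = nmin} ℓplus)
    (hminus : IsLeast {ℓ | ℓ ∈ Set.Icc 1 K ∧ n ℓ = nmin} ℓminus)
    (hra : IsGreatest
      (Set.range fun W : (ℓ : ℕ) → Matrix (Fin (n (ℓ + 1))) (Fin (n ℓ)) ℝ =>
        (pathMatrix n (activePaths n A₁ K \ (activePaths n A₁ K ∩ activePaths n A₂ K)) W).rank)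
      ra)
    (hrb : IsGreatest
      (Set.range fun W : (ℓ : ℕ) → Matrix (Fin (n (ℓ + 1))) (Fin (n ℓ)) ℝ =>
        (pathMatrix n (activePaths n A₂ K \ (activePaths n A₁ K ∩ activePaths n A₂ K)) W).rank)
      rb) :
    ∀ W : (ℓ : ℕ) → Matrix (Fin (n (ℓ + 1))) (Fin (n ℓ)) ℝ,
      (maskedMatrix n A₁ W (K + 1)).rank ≤ r₁ ∧
      (maskedMatrix n A₂ W (K + 1)).rank ≤ r₂ ∧
      ((∀ ℓ, ℓplus < ℓ → ℓ ≤ K → ∀ i : Fin (n ℓ), A₁ ℓ i = A₂ ℓ i) →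
        (Matrix.fromCols (maskedMatrix n A₁ W (K + 1))
          (maskedMatrix n A₂ W (K + 1))).rank ≤ nmin) ∧
      ((∀ ℓ, 1 ≤ ℓ → ℓ < ℓminus → ∀ i : Fin (n ℓ), A₁ ℓ i = A₂ ℓ i) →
        (Matrix.fromRows (maskedMatrix n A₁ W (K + 1))
          (maskedMatrix n A₂ W (K + 1))).rank ≤ nmin) ∧
      (maskedMatrix n A₁ W (K + 1) - maskedMatrix n A₂ W (K + 1)).rank ≤ ra + rb :=
  statement11_general n K A₁ A₂ r₁ r₂ nmin ℓplus ℓminus ra rb hr₁ hr₂ hplus hminus hra hrb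
end
end

section
/- Let A_1, …, A_k ∈ {0,1}^{n_1} be activation patterns of a shallow ReLU network without biases. Then for every λ = (λ_1, …, λ_k) ∈ ℤ^k and every W^(1) ∈ ℝ^{n_1×n_0}, W^(2) ∈ ℝ^{n_2×n_1}, the matrix Σ_{i=1}^k λ_i · W^(2)·diag(A_i)·W^(1) has rank at most the number of indices j ∈ [n_1] with Σ_{i=1}^k λ_i (A_i)_j ≠ 0; consequently all ( |supp(Σ_i λ_i A_i)| + 1 )-minors of the matrix Σ_i λ_i M_i vanish on the image of the parametrization, i.e., belong to the pattern ideal J^A. -/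
noncomputable section

/-- The diagonal 0/1 mask matrix of an activation pattern of the hidden layer. -/
def diagPat (n₁ : ℕ) (A : Fin n₁ → Bool) : Matrix (Fin n₁) (Fin n₁) ℝ :=
  Matrix.diagonal (fun j => if A j then (1 : ℝ) else 0)

open Matrix

/-- `∑ i, lam i • A i`, reading the activation patterns as 0/1 vectors. -/
def patternCombination {k n₁ : ℕ} (A : Fin k → Fin n₁ → Bool) (lam : Fin k → ℤ) (j : Fin n₁) :
    ℤ :=
  ∑ i, lam i * (if A i j then (1 : ℤ) else 0)

theorem Matrix.det_submatrix_eq_zero_of_rank_lt {K m n ι : Type*} [Field K] [Fintype n]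
    [Fintype ι] [DecidableEq ι] (M : Matrix m n K) (ρ : ι → m) (γ : ι → n)
    (h : M.rank < Fintype.card ι) : (M.submatrix ρ γ).det = 0 := by
  by_contra hdet
  have := (rank_of_det_ne_zero hdet).symm.trans_le (rank_submatrix_le M ρ γ)
  omega

theorem Matrix.rank_mul_diagonal_mul_le {K l m n : Type*} [Field K] [Fintype m] [Fintype n]
    [DecidableEq m] [DecidableEq K] (B : Matrix l m K) (d : m → K) (C : Matrix m n K) :
    (B * diagonal d * C).rank ≤ (Finset.univ.filter fun j => d j ≠ 0).card := by
  calc (B * diagonal d * C).rank ≤ (diagonal d).rank :=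
        (rank_mul_le_left _ _).trans (rank_mul_le_right _ _)
    _ = _ := by rw [rank_diagonal, Fintype.card_subtype]

theorem sum_smul_masked_eq_mul_diagonal_mul {n₀ n₁ n₂ k : ℕ} (A : Fin k → Fin n₁ → Bool)
    (lam : Fin k → ℤ) (W₁ : Matrix (Fin n₁) (Fin n₀) ℝ) (W₂ : Matrix (Fin n₂) (Fin n₁) ℝ) :
    ∑ i, (lam i : ℝ) • (W₂ * diagPat n₁ (A i) * W₁) =
      W₂ * diagonal (fun j => (patternCombination A lam j : ℝ)) * W₁ := by
  have hdiag : ∑ i, (lam i : ℝ) • diagPat n₁ (A i) =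
      diagonal (fun j => (patternCombination A lam j : ℝ)) := by
    ext a b
    rcases eq_or_ne a b with rfl | hab
    · simp [diagPat, patternCombination, Matrix.sum_apply]
    · simp [diagPat, Matrix.sum_apply, hab]
  rw [← hdiag, Matrix.mul_sum, Matrix.sum_mul]
  simp only [Matrix.mul_smul, Matrix.smul_mul]

/-- For a shallow ReLU network without biases with activation
patterns `A_1, …, A_k` and any `λ ∈ ℤ^k`, the matrix `Σ_i λ_i M_{A_i}(θ)` has rank at
most `|supp(Σ_i λ_i A_i)|`; consequently all `(|supp(Σ_i λ_i A_i)| + 1)`-minors of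
`Σ_i λ_i M_i` vanish on the image of the parametrization. -/
theorem statement12 (n₀ n₁ n₂ k : ℕ) (A : Fin k → Fin n₁ → Bool) (lam : Fin k → ℤ)
    (W₁ : Matrix (Fin n₁) (Fin n₀) ℝ) (W₂ : Matrix (Fin n₂) (Fin n₁) ℝ) :
    (∑ i, (lam i : ℝ) • (W₂ * diagPat n₁ (A i) * W₁)).rank ≤
      (Finset.univ.filter fun j : Fin n₁ =>
        (∑ i, lam i * (if A i j then (1 : ℤ) else 0)) ≠ 0).card ∧
    ∀ (ρ : Fin ((Finset.univ.filter fun j : Fin n₁ =>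
          (∑ i, lam i * (if A i j then (1 : ℤ) else 0)) ≠ 0).card + 1) → Fin n₂)
      (γ : Fin ((Finset.univ.filter fun j : Fin n₁ =>
          (∑ i, lam i * (if A i j then (1 : ℤ) else 0)) ≠ 0).card + 1) → Fin n₀),
      ((∑ i, (lam i : ℝ) • (W₂ * diagPat n₁ (A i) * W₁)).submatrix ρ γ).det = 0 := by
  have hrank : (∑ i, (lam i : ℝ) • (W₂ * diagPat n₁ (A i) * W₁)).rank ≤
      (Finset.univ.filter fun j => patternCombination A lam j ≠ 0).card := by
    rw [sum_smul_masked_eq_mul_diagonal_mul]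
    simpa only [ne_eq, Int.cast_eq_zero] using
      rank_mul_diagonal_mul_le W₂ (fun j => (patternCombination A lam j : ℝ)) W₁
  refine ⟨hrank, fun ρ γ => det_submatrix_eq_zero_of_rank_lt _ ρ γ ?_⟩
  rw [Fintype.card_fin]
  exact Nat.lt_succ_of_le hrank
end
end

section
/- Let A_1, …, A_k ∈ {0,1}^{n_1} be activation patterns of a shallow ReLU network without biases. Fix λ^(1), …, λ^(n) ∈ ℤ^k, set v_j = Σ_{i=1}^k λ^(j)_i A_i ∈ ℤ^{n_1}, t_j = supp(v_j) ⊆ [n_1], and T_j(θ) = Σ_{i=1}^k λ^(j)_i · W^(2)·diag(A_i)·W^(1). Assume that for each u ∈ ∩_{j=1}^n t_j the coefficient (v_j)_u is the same for all j ∈ [n]. Let α, β ≥ 1 and let f : [α]×[β] → [n] be an assignment such that whenever f(j_1,k_1) = f(j_2,k_2) with (j_1,k_1) ≠ (j_2,k_2), one has j_1 = j_2 or k_1 = k_2. Then for every real θ, the block matrix T(θ) ∈ ℝ^{α n_2 × β n_0} whose (j,k) block is T_{f(j,k)}(θ) satisfies rank(T(θ)) ≤ |∩_{j=1}^n t_j|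 + Σ_{j=1}^n |t_j ∖ ∩_{j'=1}^n t_{j'}|. -/
/-!
Since `T_j = W₂ · diag(v_j) · W₁`, split `v_j = c + (v_j - c)` where `c` is the common
restriction of the `v_j` to `I = ⋂ t_j`. The block matrix then becomes
`𝟙𝟙ᵀ ⊗ (W₂ diag(c) W₁) + Σ_j E_j ⊗ (W₂ diag(v_j - c) W₁)`, where `E_j` is the indicator
matrix of the fibre `f⁻¹(j)`. Any two cells of a fibre share a row or a column, so if `(x, y')`
and `(x', y)` lie in the fibre, so does `(x, y)`: the fibre is a combinatorial rectangle and
`E_j` has rank at most one. Subadditivity of rank and `rank (a bᵀ ⊗ N) ≤ rank N` then bound the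
rank by `rank diag(c) + Σ_j rank diag(v_j - c) ≤ |I| + Σ_j |t_j \ I|`.
-/

noncomputable section

/-- The linear combination `T_j(θ) = Σ_i λ^{(j)}_i M_{A_i}(θ)` of masked matrices of a
shallow ReLU network without biases. -/
def combT {n₀ n₁ n₂ k : ℕ} (A : Fin k → Fin n₁ → Bool) (lam : Fin k → ℤ)
    (W₁ : Matrix (Fin n₁) (Fin n₀) ℝ) (W₂ : Matrix (Fin n₂) (Fin n₁) ℝ) :
    Matrix (Fin n₂) (Fin n₀) ℝ :=
  ∑ i, (lam i : ℝ) • (W₂ * diagPat n₁ (A i) * W₁)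

/-- The integer vector `v_j = Σ_i λ^{(j)}_i A_i`. -/
def combV {n₁ k : ℕ} (A : Fin k → Fin n₁ → Bool) (lam : Fin k → ℤ) (u : Fin n₁) : ℤ :=
  ∑ i, lam i * (if A i u then (1 : ℤ) else 0)

/-- The support `t_j = supp(v_j)`. -/
def suppT {n₁ k : ℕ} (A : Fin k → Fin n₁ → Bool) (lam : Fin k → ℤ) : Finset (Fin n₁) :=
  Finset.univ.filter fun u => combV A lam u ≠ 0

open Matrix
open scoped Kronecker

namespace Matrix

variable {K : Type*} [Field K] {m n : Type*} [Fintype n]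

theorem rank_add_le (A B : Matrix m n K) : (A + B).rank ≤ A.rank + B.rank := by
  rw [rank, rank, rank, mulVecLin_add]
  exact (Submodule.finrank_mono (LinearMap.range_add_le _ _)).trans
    (Submodule.finrank_add_le_finrank_add_finrank _ _)

theorem rank_sum_le {η : Type*} (s : Finset η) (A : η → Matrix m n K) :
    (∑ i ∈ s, A i).rank ≤ ∑ i ∈ s, (A i).rank :=
  Finset.le_sum_of_subadditive (fun A : Matrix m n K => A.rank) rank_zero.le rank_add_le s A

theorem rank_vecMulVec_kronecker_le {α β : Type*} [Fintype α] [Fintype β] [Fintype m]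
    (a : α → K) (b : β → K) (N : Matrix m n K) :
    (vecMulVec a b ⊗ₖ N).rank ≤ N.rank := by
  classical
  have h : vecMulVec a b ⊗ₖ N =
      diagonal (fun p : α × m => a p.1) *
        N.submatrix (Prod.snd : α × m → m) (Prod.snd : β × n → n) *
        diagonal (fun q : β × n => b q.1) := by
    ext p q
    simp [diagonal_mul, mul_diagonal, vecMulVec_apply]
    ring
  rw [h]
  exact (rank_mul_le_left _ _).trans ((rank_mul_le_right _ _).trans (rank_submatrix_le _ _ _))

theorem rank_mul_diagonal_mul_le_s13 {l ι : Type*} [Fintype ι] [DecidableEq ι] (W₂ : Matrix l ι K)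
    (d : ι → K) (W₁ : Matrix ι n K) (s : Finset ι) (hs : ∀ i, d i ≠ 0 → i ∈ s) :
    (W₂ * diagonal d * W₁).rank ≤ s.card :=
  (rank_mul_le_left _ _).trans <| (rank_mul_le_right _ _).trans <|
    rank_le_card_of_support_subset _ s <| Function.support_subset_iff'.2 fun i his => by
      simp [not_not.mp (mt (hs i) his)]

end Matrix

section AssignBlocks

variable {K : Type*} [Field K] {α β γ m n : Type*} [DecidableEq γ]

def assignBlocks (f : α × β → γ) (T : γ → Matrix m n K) : Matrix (α × m) (β × n) K :=
  of fun p q => T (f (p.1, q.1)) p.2 q.2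

def fiberIndicator (f : α × β → γ) (j : γ) : Matrix α β K :=
  of fun i k => if f (i, k) = j then 1 else 0

theorem exists_fiberIndicator_eq_vecMulVec {f : α × β → γ}
    (hf : ∀ p q, f p = f q → p.1 = q.1 ∨ p.2 = q.2) (j : γ) :
    ∃ (a : α → K) (b : β → K), fiberIndicator f j = vecMulVec a b := by
  classical
  refine ⟨fun i => if ∃ k, f (i, k) = j then 1 else 0,
    fun k => if ∃ i, f (i, k) = j then 1 else 0, ?_⟩
  ext i k
  have hmem : f (i, k) = j ↔ (∃ k', f (i, k') = j) ∧ ∃ i', f (i', k) = j := by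
    refine ⟨fun h => ⟨⟨k, h⟩, ⟨i, h⟩⟩, fun ⟨⟨k', hk'⟩, ⟨i', hi'⟩⟩ => ?_⟩
    rcases hf (i, k') (i', k) (hk'.trans hi'.symm) with rfl | rfl
    exacts [hi', hk']
  simp only [fiberIndicator, of_apply, vecMulVec_apply, hmem, ite_and, boole_mul]

theorem assignBlocks_add [Fintype γ] (f : α × β → γ) (C : Matrix m n K) (D : γ → Matrix m n K) :
    assignBlocks f (fun j => C + D j) =
      vecMulVec 1 1 ⊗ₖ C + ∑ j, fiberIndicator f j ⊗ₖ D j := by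
  ext p q
  simp [assignBlocks, fiberIndicator, Matrix.sum_apply, kroneckerMap_apply]

theorem rank_assignBlocks_add_le [Fintype α] [Fintype β] [Fintype γ] [Fintype m] [Fintype n]
    {f : α × β → γ} (hf : ∀ p q, f p = f q → p.1 = q.1 ∨ p.2 = q.2) (C : Matrix m n K)
    (D : γ → Matrix m n K) :
    (assignBlocks f (fun j => C + D j)).rank ≤ C.rank + ∑ j, (D j).rank := by
  rw [assignBlocks_add]
  refine (rank_add_le _ _).trans (add_le_add (rank_vecMulVec_kronecker_le _ _ _) ?_)
  refine (rank_sum_le _ _).trans (Finset.sum_le_sum fun j _ => ?_)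
  obtain ⟨a, b, hab⟩ := exists_fiberIndicator_eq_vecMulVec (K := K) hf j
  rw [hab]
  exact rank_vecMulVec_kronecker_le _ _ _

theorem rank_assignBlocks_mul_diagonal_mul_le {ι : Type*} [Fintype α] [Fintype β] [Fintype γ]
    [Nonempty γ] [Fintype m] [Fintype n] [Fintype ι] [DecidableEq ι] {f : α × β → γ}
    (hf : ∀ p q, f p = f q → p.1 = q.1 ∨ p.2 = q.2) (v : γ → ι → K) (I : Finset ι)
    (hI : ∀ u ∈ I, ∀ j j', v j u = v j' u) (t : γ → Finset ι) (ht : ∀ j u, v j u ≠ 0 → u ∈ t j)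
    (W₂ : Matrix m ι K) (W₁ : Matrix ι n K) :
    (assignBlocks f fun j => W₂ * diagonal (v j) * W₁).rank ≤ I.card + ∑ j, (t j \ I).card := by
  obtain ⟨j₀⟩ := ‹Nonempty γ›
  set c : ι → K := fun u => if u ∈ I then v j₀ u else 0
  have hsplit : ∀ j, W₂ * diagonal (v j) * W₁ =
      W₂ * diagonal c * W₁ + W₂ * diagonal (v j - c) * W₁ := fun j => by
    simp only [← Matrix.add_mul, ← Matrix.mul_add, diagonal_add, Pi.sub_apply, add_sub_cancel]
  simp only [hsplit]
  refine (rank_assignBlocks_add_le hf _ _).trans (add_le_add ?_ (Finset.sum_le_sum fun j _ => ?_))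
  · refine rank_mul_diagonal_mul_le_s13 _ _ _ I fun u hu => ?_
    by_contra huI
    simp [c, huI] at hu
  · refine rank_mul_diagonal_mul_le_s13 _ _ _ _ fun u hu => ?_
    by_cases huI : u ∈ I
    · simp [c, huI, hI u huI j j₀] at hu
    · simp only [c, huI, if_false, Pi.sub_apply, sub_zero] at hu
      exact Finset.mem_sdiff.2 ⟨ht j u hu, huI⟩

end AssignBlocks

lemma combT_eq {n₀ n₁ n₂ k : ℕ} (A : Fin k → Fin n₁ → Bool) (l : Fin k → ℤ)
    (W₁ : Matrix (Fin n₁) (Fin n₀) ℝ) (W₂ : Matrix (Fin n₂) (Fin n₁) ℝ) :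
    combT A l W₁ W₂ = W₂ * diagonal (fun u => (combV A l u : ℝ)) * W₁ := by
  have hdiag : ∑ i, (l i : ℝ) • diagPat n₁ (A i) = diagonal fun u => (combV A l u : ℝ) := by
    ext u u'
    by_cases h : u = u' <;> simp [diagPat, combV, Matrix.sum_apply, h]
  simp only [combT, ← hdiag, Matrix.mul_sum, Matrix.sum_mul, Matrix.mul_smul, Matrix.smul_mul]

theorem statement13_general (n₀ n₁ n₂ k nn : ℕ) (hnn : 0 < nn)
    (A : Fin k → Fin n₁ → Bool) (lam : Fin nn → Fin k → ℤ)
    (hcoef : ∀ u ∈ Finset.univ.inf (fun j : Fin nn => suppT A (lam j)),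
      ∀ j j' : Fin nn, combV A (lam j) u = combV A (lam j') u)
    (α β : ℕ)
    (f : Fin α × Fin β → Fin nn)
    (hf : ∀ p q : Fin α × Fin β, p ≠ q → f p = f q → p.1 = q.1 ∨ p.2 = q.2)
    (W₁ : Matrix (Fin n₁) (Fin n₀) ℝ) (W₂ : Matrix (Fin n₂) (Fin n₁) ℝ) :
    (Matrix.of fun (p : Fin α × Fin n₂) (q : Fin β × Fin n₀) =>
        combT A (lam (f (p.1, q.1))) W₁ W₂ p.2 q.2).rank ≤
      (Finset.univ.inf (fun j : Fin nn => suppT A (lam j))).card +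
        ∑ j : Fin nn,
          (suppT A (lam j) \ Finset.univ.inf (fun j' : Fin nn => suppT A (lam j'))).card := by
  have : Nonempty (Fin nn) := ⟨⟨0, hnn⟩⟩
  have hf' : ∀ p q : Fin α × Fin β, f p = f q → p.1 = q.1 ∨ p.2 = q.2 := fun p q hpq =>
    (eq_or_ne p q).elim (fun h => Or.inl (congrArg Prod.fst h)) (hf p q · hpq)
  show (assignBlocks f fun j => combT A (lam j) W₁ W₂).rank ≤ _
  simp only [combT_eq]
  refine rank_assignBlocks_mul_diagonal_mul_le hf' _ _
    (fun u hu j j' => by rw [hcoef u hu j j']) _ (fun j u hu => ?_) W₂ W₁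
  simpa [suppT] using hu

/-- Rank bound for block matrices of linear combinations of masked
matrices of a shallow ReLU network without biases. -/
theorem statement13 (n₀ n₁ n₂ k nn : ℕ) (hnn : 0 < nn)
    (A : Fin k → Fin n₁ → Bool) (lam : Fin nn → Fin k → ℤ)
    (hcoef : ∀ u ∈ Finset.univ.inf (fun j : Fin nn => suppT A (lam j)),
      ∀ j j' : Fin nn, combV A (lam j) u = combV A (lam j') u)
    (α β : ℕ) (hα : 0 < α) (hβ : 0 < β)
    (f : Fin α × Fin β → Fin nn)
    (hf : ∀ p q : Fin α × Fin β, p ≠ q → f p = f q → p.1 = q.1 ∨ p.2 = q.2)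
    (W₁ : Matrix (Fin n₁) (Fin n₀) ℝ) (W₂ : Matrix (Fin n₂) (Fin n₁) ℝ) :
    (Matrix.of fun (p : Fin α × Fin n₂) (q : Fin β × Fin n₀) =>
        combT A (lam (f (p.1, q.1))) W₁ W₂ p.2 q.2).rank ≤
      (Finset.univ.inf (fun j : Fin nn => suppT A (lam j))).card +
        ∑ j : Fin nn,
          (suppT A (lam j) \ Finset.univ.inf (fun j' : Fin nn => suppT A (lam j'))).card :=
  statement13_general n₀ n₁ n₂ k nn hnn A lam hcoef α β f hf W₁ W₂
end
end

section
/- Let n_0 ≥ n_1 and n_1 ≤ n_2, let 0 ≤ s ≤ r_1, r_2 with r_1 + r_2 − s = n_1, and let A_1 ∈ {0,1}^{n_1} be the indicator vector of {1,…,r_1} and A_2 the indicator vector of {r_1−s+1,…,n_1}. Suppose W^(1), Y^(1) ∈ ℝ^{n_1×n_0} and W^(2), Y^(2) ∈ ℝ^{n_2×n_1} satisfy rank(W^(1)) = rank(Y^(1)) = rank(Y^(2)) = n_1 and W^(2)·diag(A_i)·W^(1) = Y^(2)·diag(A_i)·Y^(1) for i = 1, 2. Then there exists an invertible matrix Z ∈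 GL_{n_1}(ℝ) with Y^(1) = Z·W^(1) which is block diagonal with respect to the partition {1,…,r_1−s}, {r_1−s+1,…,r_1}, {r_1+1,…,n_1}, i.e., Z_{uv} = 0 whenever u and v lie in different parts of this partition. -/
/-!
With a left inverse `L` of `Y₂` put `B = L W₂`. The two hypotheses become `P Y₁ = B P W₁` and
`Q Y₁ = B Q W₁` for the commuting diagonal projections `P`, `Q` of the two activation patterns,
whose supports cover all hidden neurons: `(1 - P) (1 - Q) = 0`. After cancelling a right inverse
of `W₁` they give `(1 - P) B P = 0`, `(1 - Q) B Q = 0` and `P B Q = Q B P`, which together force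
`B` to commute with `P` and `Q`; that is exactly block diagonality for the partition cut out by
the two patterns. Finally `Y₁ = (P + (1 - P) Q) Y₁ = B W₁`, and `B` is invertible since `Y₁` has
full rank.
-/

noncomputable section

/-- The block index of a hidden neuron with respect to the partition
`{1,…,r₁−s}, {r₁−s+1,…,r₁}, {r₁+1,…,n₁}`. -/
def blockIdx (n₁ r₁ s : ℕ) (u : Fin n₁) : ℕ :=
  if u.1 < r₁ - s then 0 else if u.1 < r₁ then 1 else 2

open Matrix

section Ring

variable {R : Type*} [Ring R] {e p q b y : R}

theorem commute_of_one_sub_mul_mul_eq_zero (h₁ : (1 - e) * b * e = 0)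
    (h₂ : e * b * (1 - e) = 0) : Commute e b := by
  have : e * b - b * e = e * b * (1 - e) - (1 - e) * b * e := by noncomm_ring
  exact sub_eq_zero.mp (by rw [this, h₁, h₂, sub_zero])

theorem IsIdempotentElem.one_sub_mul_mul_eq_zero (he : IsIdempotentElem e) (hey : e * y = b * e) :
    (1 - e) * b * e = 0 := by
  rw [mul_assoc, ← hey, ← mul_assoc, he.one_sub_mul_self, zero_mul]

theorem commute_of_mul_eq_mul_of_isIdempotentElem (hp : IsIdempotentElem p)
    (hq : IsIdempotentElem q) (hpq : Commute p q) (hcover : (1 - p) * (1 - q) = 0)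
    (hpy : p * y = b * p) (hqy : q * y = b * q) : Commute p b ∧ Commute q b := by
  have hswap : p * b * q = q * b * p := by
    rw [mul_assoc, ← hqy, ← mul_assoc, hpq.eq, mul_assoc, hpy, mul_assoc]
  have hp_cover : 1 - p = q * (1 - p) := by
    rw [← ((Commute.one_left q).sub_left hpq).eq, ← sub_eq_zero, ← mul_one_sub, hcover]
  have hq_cover : 1 - q = p * (1 - q) := by
    rw [← sub_eq_zero, ← one_sub_mul, hcover]
  constructor
  · refine commute_of_one_sub_mul_mul_eq_zero (hp.one_sub_mul_mul_eq_zero hpy) ?_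
    rw [hp_cover, ← mul_assoc, hswap, mul_assoc, hp.mul_one_sub_self, mul_zero]
  · refine commute_of_one_sub_mul_mul_eq_zero (hq.one_sub_mul_mul_eq_zero hqy) ?_
    rw [hq_cover, ← mul_assoc, ← hswap, mul_assoc, hq.mul_one_sub_self, mul_zero]

end Ring

theorem Matrix.exists_mul_eq_one_of_rank_eq_card_height {K m n : Type*} [Field K] [Fintype m]
    [DecidableEq m] [Fintype n] {A : Matrix m n K} (h : A.rank = Fintype.card m) :
    ∃ B : Matrix n m K, A * B = 1 := by
  refine mulVec_surjective_iff_exists_right_inverse.mp ?_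
  change Function.Surjective A.mulVecLin
  rw [← LinearMap.range_eq_top]
  apply Submodule.eq_top_of_finrank_eq
  rw [show Module.finrank K (LinearMap.range A.mulVecLin) = A.rank from rfl, h,
    Module.finrank_fintype_fun_eq_card]

theorem Matrix.exists_mul_eq_one_of_rank_eq_card_width {K m n : Type*} [Field K] [Fintype m]
    [Fintype n] [DecidableEq n] {A : Matrix m n K} (h : A.rank = Fintype.card n) :
    ∃ B : Matrix n m K, B * A = 1 := by
  obtain ⟨B, hB⟩ := exists_mul_eq_one_of_rank_eq_card_height (A := Aᵀ) (by rwa [rank_transpose])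
  refine ⟨Bᵀ, ?_⟩
  simpa only [transpose_mul, transpose_transpose, transpose_one] using congrArg transpose hB

theorem Commute.apply_eq_zero_of_diagonal {R n : Type*} [CommRing R] [NoZeroDivisors R]
    [Fintype n] [DecidableEq n] {d : n → R} {Z : Matrix n n R} (h : Commute (diagonal d) Z)
    {u v : n} (huv : d u ≠ d v) : Z u v = 0 := by
  have := congrFun (congrFun h.eq u) v
  rw [diagonal_mul, mul_diagonal, mul_comm, ← sub_eq_zero, ← mul_sub] at this
  exact (mul_eq_zero.mp this).resolve_right (sub_ne_zero.mpr huv)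

section DiagPat

variable {n : ℕ}

theorem diagPat_mul_diagPat (A A' : Fin n → Bool) :
    diagPat n A * diagPat n A' = diagPat n (fun j => A j && A' j) := by
  rw [diagPat, diagPat, diagPat, diagonal_mul_diagonal]
  congr 1; funext j; cases A j <;> cases A' j <;> simp

theorem one_sub_diagPat (A : Fin n → Bool) : 1 - diagPat n A = diagPat n (fun j => !A j) := by
  rw [diagPat, diagPat, ← diagonal_one, diagonal_sub]
  congr 1; funext j; cases A j <;> simp

theorem isIdempotentElem_diagPat (A : Fin n → Bool) : IsIdempotentElem (diagPat n A) := by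
  rw [IsIdempotentElem, diagPat_mul_diagPat]; simp

theorem commute_diagPat (A A' : Fin n → Bool) : Commute (diagPat n A) (diagPat n A') :=
  commute_diagonal _ _

theorem one_sub_diagPat_mul_one_sub_diagPat {A A' : Fin n → Bool} (h : ∀ j, A j || A' j) :
    (1 - diagPat n A) * (1 - diagPat n A') = 0 := by
  rw [one_sub_diagPat, one_sub_diagPat, diagPat_mul_diagPat, diagPat, ← diagonal_zero]
  congr 1; funext j; have := h j; revert this; cases A j <;> cases A' j <;> simp

theorem Commute.apply_eq_zero_of_diagPat {A : Fin n → Bool} {Z : Matrix (Fin n) (Fin n) ℝ}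
    (h : Commute (diagPat n A) Z) {u v : Fin n} (huv : A u ≠ A v) : Z u v = 0 :=
  h.apply_eq_zero_of_diagonal (by cases hu : A u <;> cases hv : A v <;> simp_all)

theorem decide_ne_or_decide_ne_of_blockIdx_ne {r s : ℕ} {u v : Fin n}
    (h : blockIdx n r s u ≠ blockIdx n r s v) :
    decide (u.1 < r) ≠ decide (v.1 < r) ∨ decide (r - s ≤ u.1) ≠ decide (r - s ≤ v.1) := by
  contrapose! h
  simp only [decide_eq_decide] at h
  unfold blockIdx
  split_ifs <;> omega

end DiagPat

theorem Matrix.commute_and_eq_mul_of_idempotent_cover {R m k : Type*} [Ring R] [Fintype m]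
    [DecidableEq m] [Fintype k] {P Q B : Matrix m m R} {W Y : Matrix m k R} {S : Matrix k m R}
    (hS : W * S = 1) (hP : IsIdempotentElem P) (hQ : IsIdempotentElem Q) (hPQ : Commute P Q)
    (hcover : (1 - P) * (1 - Q) = 0) (hPY : P * Y = B * P * W) (hQY : Q * Y = B * Q * W) :
    Commute P B ∧ Commute Q B ∧ Y = B * W := by
  have hsquare : ∀ D : Matrix m m R, D * Y = B * D * W → D * (Y * S) = B * D := fun D h => by
    rw [← Matrix.mul_assoc, h, Matrix.mul_assoc, hS, Matrix.mul_one]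
  obtain ⟨hPB, hQB⟩ :=
    commute_of_mul_eq_mul_of_isIdempotentElem hP hQ hPQ hcover (hsquare P hPY) (hsquare Q hQY)
  have hsum : P + (1 - P) * Q = 1 := by
    rw [← sub_eq_zero, show P + (1 - P) * Q - 1 = -((1 - P) * (1 - Q)) by noncomm_ring, hcover,
      neg_zero]
  refine ⟨hPB, hQB, ?_⟩
  calc Y = (P + (1 - P) * Q) * Y := by rw [hsum, Matrix.one_mul]
    _ = (P + (1 - P) * Q) * (B * W) := by
      rw [Matrix.add_mul, Matrix.add_mul, Matrix.mul_assoc, hPY, Matrix.mul_assoc, hQY,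
        ← Matrix.mul_assoc, ← hPB.eq, ← hQB.eq, Matrix.mul_assoc, Matrix.mul_assoc,
        Matrix.mul_assoc]
    _ = B * W := by rw [hsum, Matrix.one_mul]

theorem statement16_general (n₀ n₁ n₂ r₁ s : ℕ)
    (W₁ Y₁ : Matrix (Fin n₁) (Fin n₀) ℝ) (W₂ Y₂ : Matrix (Fin n₂) (Fin n₁) ℝ)
    (hW₁ : W₁.rank = n₁) (hY₁ : Y₁.rank = n₁) (hY₂ : Y₂.rank = n₁)
    (heq₁ : W₂ * diagPat n₁ (fun j => decide (j.1 < r₁)) * W₁ =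
      Y₂ * diagPat n₁ (fun j => decide (j.1 < r₁)) * Y₁)
    (heq₂ : W₂ * diagPat n₁ (fun j => decide (r₁ - s ≤ j.1)) * W₁ =
      Y₂ * diagPat n₁ (fun j => decide (r₁ - s ≤ j.1)) * Y₁) :
    ∃ Z : Matrix (Fin n₁) (Fin n₁) ℝ,
      IsUnit Z ∧ Y₁ = Z * W₁ ∧
      ∀ u v : Fin n₁, blockIdx n₁ r₁ s u ≠ blockIdx n₁ r₁ s v → Z u v = 0 := by
  obtain ⟨S, hS⟩ := W₁.exists_mul_eq_one_of_rank_eq_card_height (by simpa using hW₁)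
  obtain ⟨T, hT⟩ := Y₁.exists_mul_eq_one_of_rank_eq_card_height (by simpa using hY₁)
  obtain ⟨L, hL⟩ := Y₂.exists_mul_eq_one_of_rank_eq_card_width (by simpa using hY₂)
  have hmask : ∀ D, W₂ * D * W₁ = Y₂ * D * Y₁ → D * Y₁ = L * W₂ * D * W₁ := fun D h => by
    rw [Matrix.mul_assoc L, Matrix.mul_assoc L, h, Matrix.mul_assoc Y₂, ← Matrix.mul_assoc L, hL,
      Matrix.one_mul]
  have hcover : ∀ j : Fin n₁, decide (j.1 < r₁) || decide (r₁ - s ≤ j.1) := fun j => by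
    simp only [Bool.or_eq_true, decide_eq_true_eq]; omega
  obtain ⟨hPB, hQB, hYB⟩ := commute_and_eq_mul_of_idempotent_cover hS
    (isIdempotentElem_diagPat _) (isIdempotentElem_diagPat _) (commute_diagPat _ _)
    (one_sub_diagPat_mul_one_sub_diagPat hcover) (hmask _ heq₁) (hmask _ heq₂)
  refine ⟨L * W₂, IsUnit.of_mul_eq_one (W₁ * T) (by rw [← Matrix.mul_assoc, ← hYB, hT]), hYB,
    fun u v huv => ?_⟩
  rcases decide_ne_or_decide_ne_of_blockIdx_ne huv with h | h
  · exact hPB.apply_eq_zero_of_diagPat h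
  · exact hQB.apply_eq_zero_of_diagPat h

/-- Let `n_0 ≥ n_1`, `n_1 ≤ n_2`, `s ≤ r_1, r_2` with
`r_1 + r_2 − s = n_1`, let `A_1` be the indicator of the first `r_1` hidden neurons and
`A_2` the indicator of the last `r_2`.  If two full-rank parameter pairs produce the
same two masked matrices, then the change of basis `Z` with `Y^{(1)} = Z·W^{(1)}` exists,
is invertible, and is block diagonal for the partition
`{1,…,r_1−s}, {r_1−s+1,…,r_1}, {r_1+1,…,n_1}`. -/
theorem statement16 (n₀ n₁ n₂ r₁ r₂ s : ℕ)
    (h₀ : n₁ ≤ n₀) (h₂ : n₁ ≤ n₂)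
    (hs₁ : s ≤ r₁) (hs₂ : s ≤ r₂) (hfull : r₁ + r₂ - s = n₁)
    (W₁ Y₁ : Matrix (Fin n₁) (Fin n₀) ℝ) (W₂ Y₂ : Matrix (Fin n₂) (Fin n₁) ℝ)
    (hW₁ : W₁.rank = n₁) (hY₁ : Y₁.rank = n₁) (hY₂ : Y₂.rank = n₁)
    (heq₁ : W₂ * diagPat n₁ (fun j => decide (j.1 < r₁)) * W₁ =
      Y₂ * diagPat n₁ (fun j => decide (j.1 < r₁)) * Y₁)
    (heq₂ : W₂ * diagPat n₁ (fun j => decide (r₁ - s ≤ j.1)) * W₁ =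
      Y₂ * diagPat n₁ (fun j => decide (r₁ - s ≤ j.1)) * Y₁) :
    ∃ Z : Matrix (Fin n₁) (Fin n₁) ℝ,
      IsUnit Z ∧ Y₁ = Z * W₁ ∧
      ∀ u v : Fin n₁, blockIdx n₁ r₁ s u ≠ blockIdx n₁ r₁ s v → Z u v = 0 :=
  statement16_general n₀ n₁ n₂ r₁ s W₁ Y₁ W₂ Y₂ hW₁ hY₁ hY₂ heq₁ heq₂
end
end
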